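/- Let WC_m denote the cycle graph C_{2m} (m ≥ 3) with one pendant leaf attached to each of its 2m vertices (the fully whiskered 2m-cycle). Then the 2-matching complex M₂(WC_m) is homotopy equivalent to the sphere S^{2m−1}. -/

import Mathlib

/-!
The point `y` of the sphere `S^{N-1} ⊆ ℝ^N` is sent to the point of `|M₂(WC_N)|` that puts weight
`y_i⁺` on the cycle edge `c_i = {i, i+1}` and weight `y_i⁻` on the whisker `w_{i+1}`, rescaled to
total weight one. This embeds the boundary of the cross-polytope, whose antipodal vertices are
`c_i` and `w_{i+1}`; it lands in `M₂`, since `c_{j-1}` and `w_j` never both get weight.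

Conversely, a point `x` of `|M₂|` with weights `A_i` on `c_i` and `B_i` on `w_i` is sent to the
direction of `U_i = A_i - B_{i+1} - A_{i-1} B_i`. The correction term vanishes on the
cross-polytope, so the composite sphere → `|M₂|` → sphere is the identity. It is needed to keep
`U` away from `0`: the linear part vanishes at the midpoint of `{c_i, w_{i+1}}`, a face of `M₂`
but not of the cross-polytope. For the other composite, the supports of `x` and of its image lie in
a common face of `M₂`, so the straight-line homotopy to the identity stays inside `|M₂|`.
-/

noncomputable section

/-- An abstract simplicial complex on vertex type `V` (faces include `∅`). -/
structure AbsSC (V : Type*) where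
  faces : Set (Finset V)
  down_closed : ∀ ⦃σ τ : Finset V⦄, σ ∈ faces → τ ⊆ σ → τ ∈ faces

/-- Geometric realization of an abstract simplicial complex on a finite vertex set. -/
def realization {V : Type*} [Fintype V] (K : AbsSC V) : Type _ :=
  {f : V → ℝ // (∀ v, 0 ≤ f v) ∧ (∑ v, f v) = 1 ∧ ∃ σ ∈ K.faces, ∀ v, f v ≠ 0 → v ∈ σ}

instance {V : Type*} [Fintype V] (K : AbsSC V) : TopologicalSpace (realization K) := by
  unfold realization; infer_instance

/-- The `n`-sphere. -/
def sphereSpace (n : ℕ) : Type := Metric.sphere (0 : EuclideanSpace ℝ (Fin (n+1))) 1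

instance (n : ℕ) : TopologicalSpace (sphereSpace n) := by
  unfold sphereSpace; infer_instance

/-- A base point on the `n`-sphere. -/
def basept (n : ℕ) : sphereSpace n :=
  ⟨EuclideanSpace.single 0 1, by
    simp [sphereSpace, EuclideanSpace.norm_single]⟩

/-- A wedge of `k` copies of the `n`-sphere (one-point union at the base points). -/
def wedgeSpheres (k n : ℕ) : Type :=
  Quot (fun a b : (Σ _ : Fin k, sphereSpace n) ⊕ Unit =>
    b = Sum.inr () ∧ ∃ i : Fin k, a = Sum.inl ⟨i, basept n⟩)

instance (k n : ℕ) : TopologicalSpace (wedgeSpheres k n) := by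
  unfold wedgeSpheres; infer_instance

/-- `H` is a 2-matching of `G`: a set of edges of `G` such that every vertex is
incident to at most 2 of them. -/
def IsTwoMatching {V : Type*} [DecidableEq V] (G : SimpleGraph V) (H : Finset (Sym2 V)) : Prop :=
  ↑H ⊆ G.edgeSet ∧ ∀ v : V, (H.filter (fun e => v ∈ e)).card ≤ 2

/-- `H` is a matching of `G`. -/
def IsMatchingSet {V : Type*} [DecidableEq V] (G : SimpleGraph V) (H : Finset (Sym2 V)) : Prop :=
  ↑H ⊆ G.edgeSet ∧ ∀ v : V, (H.filter (fun e => v ∈ e)).card ≤ 1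

/-- The 2-matching complex `M₂(G)`. -/
def M2 {V : Type*} [DecidableEq V] (G : SimpleGraph V) : AbsSC (Sym2 V) where
  faces := {H | IsTwoMatching G H}
  down_closed := by
    intro σ τ hσ hτ
    exact ⟨fun e he => hσ.1 (hτ he), fun v =>
      le_trans (Finset.card_le_card (Finset.filter_subset_filter _ hτ)) (hσ.2 v)⟩

/-- The matching complex `M₁(G)`. -/
def M1 {V : Type*} [DecidableEq V] (G : SimpleGraph V) : AbsSC (Sym2 V) where
  faces := {H | IsMatchingSet G H}
  down_closed := by
    intro σ τ hσ hτ
    exact ⟨fun e he => hσ.1 (hτ he), fun v =>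
      le_trans (Finset.card_le_card (Finset.filter_subset_filter _ hτ)) (hσ.2 v)⟩

/-- The independence complex of a graph. -/
def IndC {V : Type*} (G : SimpleGraph V) : AbsSC V where
  faces := {S | ∀ a ∈ S, ∀ b ∈ S, ¬ G.Adj a b}
  down_closed := by
    intro σ τ hσ hτ a ha b hb
    exact hσ a (hτ ha) b (hτ hb)


/-- The fully whiskered `N`-cycle: the cycle on `Fin N` (`inl` vertices) with one
pendant leaf (`inr` vertices) attached to each cycle vertex. -/
def whiskeredCycle (N : ℕ) : SimpleGraph (Fin N ⊕ Fin N) :=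
  SimpleGraph.fromRel (fun a b =>
    match a, b with
    | Sum.inl i, Sum.inl j =>
        (j : ℕ) = (i : ℕ) + 1 ∨ ((i : ℕ) = N - 1 ∧ (j : ℕ) = 0)
    | Sum.inl i, Sum.inr j => i = j
    | _, _ => False)


section Realization

variable {V : Type*} [Fintype V] {K : AbsSC V}

@[fun_prop]
theorem realization.continuous_apply (v : V) : Continuous fun x : realization K => x.1 v :=
  (_root_.continuous_apply v).comp continuous_subtype_val

theorem realization.val_ne_zero (x : realization K) : x.1 ≠ 0 := by
  intro h
  simpa [h] using x.2.2.1

theorem realization.homotopic_of_exists_face {X : Type*} [TopologicalSpace X]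
    (f g : C(X, realization K))
    (h : ∀ x, ∃ σ ∈ K.faces, ∀ v, (f x).1 v ≠ 0 ∨ (g x).1 v ≠ 0 → v ∈ σ) :
    f.Homotopic g :=
  ⟨{ toFun := fun p => ⟨fun v => (1 - p.1 : ℝ) * (f p.2).1 v + p.1 * (g p.2).1 v, by
        refine ⟨fun v => ?_, ?_, ?_⟩
        · have := (f p.2).2.1 v
          have := (g p.2).2.1 v
          have := unitInterval.nonneg p.1
          have := unitInterval.one_minus_nonneg p.1
          positivity
        · rw [Finset.sum_add_distrib, ← Finset.mul_sum, ← Finset.mul_sum, (f p.2).2.2.1,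
            (g p.2).2.2.1]
          ring
        · obtain ⟨σ, hσ, hsupp⟩ := h p.2
          refine ⟨σ, hσ, fun v hv => hsupp v ?_⟩
          by_contra! h0
          simp [h0.1, h0.2] at hv⟩
     continuous_toFun := by
       refine Continuous.subtype_mk (continuous_pi fun v => ?_) _
       have hf : Continuous fun p : unitInterval × X => (f p.2).1 v :=
         (realization.continuous_apply v).comp (f.continuous.comp continuous_snd)
       have hg : Continuous fun p : unitInterval × X => (g p.2).1 v :=
         (realization.continuous_apply v).comp (g.continuous.comp continuous_snd)
       have ht : Continuous fun p : unitInterval × X => (p.1 : ℝ) := by fun_prop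
       exact ((continuous_const.sub ht).mul hf).add (ht.mul hg)
     map_zero_left := fun x => by apply Subtype.ext; funext v; simp
     map_one_left := fun x => by apply Subtype.ext; funext v; simp }⟩

end Realization

theorem sum_abs_pos {ι : Type*} [Fintype ι] {y : ι → ℝ} (hy : y ≠ 0) : 0 < ∑ i, |y i| := by
  obtain ⟨i, hi⟩ := Function.ne_iff.1 hy
  exact Finset.sum_pos' (fun i _ => abs_nonneg _) ⟨i, Finset.mem_univ _, abs_pos.2 hi⟩

theorem posPart_mul_negPart_eq_zero {α : Type*} [Ring α] [LinearOrder α] [IsOrderedRing α]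
    (a : α) : a⁺ * a⁻ = 0 := by
  rcases le_total a 0 with h | h
  · rw [posPart_eq_zero.2 h, zero_mul]
  · rw [negPart_eq_zero.2 h, mul_zero]

theorem Fin.one_add_one_ne_zero_of_two_le {n : ℕ} (hn : 2 ≤ n) : (1 + 1 : Fin (n + 1)) ≠ 0 := by
  rw [Ne, Fin.ext_iff, Fin.val_add, Fin.val_one', Nat.mod_eq_of_lt (by omega : 1 < n + 1),
    Fin.val_zero, Nat.mod_eq_of_lt (by omega)]
  omega

section Sphere

variable {n : ℕ}

theorem sphereSpace.ofLp_ne_zero (y : sphereSpace n) : (y.1 : Fin (n + 1) → ℝ) ≠ 0 := by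
  simpa using ne_zero_of_mem_unit_sphere y

def toSphere {X : Type*} [TopologicalSpace X] (u : C(X, EuclideanSpace ℝ (Fin (n + 1))))
    (hu : ∀ x, u x ≠ 0) : C(X, sphereSpace n) where
  toFun x := (⟨‖u x‖⁻¹ • u x, by simp [norm_smul, hu x]⟩ :
    Metric.sphere (0 : EuclideanSpace ℝ (Fin (n + 1))) 1)
  continuous_toFun := by
    apply Continuous.subtype_mk
    exact (u.continuous.norm.inv₀ fun x => norm_ne_zero_iff.2 (hu x)).smul u.continuous

end Sphere

namespace whiskeredCycle

open Sum

variable {n : ℕ}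

abbrev Edge (n : ℕ) : Type := Sym2 (Fin (n + 1) ⊕ Fin (n + 1))

abbrev TwoMatchingSpace (n : ℕ) : Type := realization (M2 (whiskeredCycle (n + 1)))

def cycleEdge (i : Fin (n + 1)) : Edge n := s(inl i, inl (i + 1))

def whisker (i : Fin (n + 1)) : Edge n := s(inl i, inr i)

def star (j : Fin (n + 1)) : Finset (Edge n) := {cycleEdge (j - 1), cycleEdge j, whisker j}

theorem adj_inl_inl [NeZero n] {i j : Fin (n + 1)} :
    (whiskeredCycle (n + 1)).Adj (inl i) (inl j) ↔ j = i + 1 ∨ i = j + 1 := by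
  simp only [whiskeredCycle, SimpleGraph.fromRel_adj, ne_eq, inl.injEq, Fin.ext_iff,
    Fin.val_add_one, Fin.val_last]
  have := NeZero.ne n
  split_ifs <;> omega

theorem mem_edgeSet_iff [NeZero n] {e : Edge n} :
    e ∈ (whiskeredCycle (n + 1)).edgeSet ↔ ∃ i, e = cycleEdge i ∨ e = whisker i := by
  induction e using Sym2.ind with | _ a b =>
  rcases a with i | i <;> rcases b with j | j
  · simp only [SimpleGraph.mem_edgeSet, adj_inl_inl, cycleEdge, whisker, Sym2.eq, Sym2.rel_iff',
      Prod.mk.injEq, inl.injEq, Prod.swap_prod_mk, reduceCtorEq, and_false, false_and, or_self,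
      or_false]
    constructor
    · rintro (rfl | rfl)
      exacts [⟨i, .inl ⟨rfl, rfl⟩⟩, ⟨j, .inr ⟨rfl, rfl⟩⟩]
    · rintro ⟨k, ⟨rfl, rfl⟩ | ⟨rfl, rfl⟩⟩
      exacts [.inl rfl, .inr rfl]
  · simp [whiskeredCycle, cycleEdge, whisker, eq_comm]
  · simp [whiskeredCycle, cycleEdge, whisker]
  · simp [whiskeredCycle, cycleEdge, whisker]

theorem cycleEdge_injective (hn : 2 ≤ n) : Function.Injective (cycleEdge (n := n)) := by
  intro i j h
  rcases Sym2.eq_iff.1 h with ⟨h1, -⟩ | ⟨h1, h2⟩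
  · exact inl_injective h1
  · rw [inl.injEq] at h1 h2
    subst h1
    exact absurd (by simpa [add_assoc] using h2) (Fin.one_add_one_ne_zero_of_two_le hn)

theorem whisker_injective : Function.Injective (whisker (n := n)) := by
  intro i j h
  simpa [whisker] using h

theorem cycleEdge_ne_whisker (i j : Fin (n + 1)) : cycleEdge i ≠ whisker j := by
  simp [cycleEdge, whisker]

theorem inl_mem_of_mem_star {j : Fin (n + 1)} {e : Edge n} (he : e ∈ star j) : inl j ∈ e := by
  simp only [star, Finset.mem_insert, Finset.mem_singleton] at he
  rcases he with rfl | rfl | rfl <;> simp [cycleEdge, whisker]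

theorem mem_star_of_inl_mem [NeZero n] {j : Fin (n + 1)} {e : Edge n}
    (he : e ∈ (whiskeredCycle (n + 1)).edgeSet) (hj : inl j ∈ e) : e ∈ star j := by
  obtain ⟨i, rfl | rfl⟩ := mem_edgeSet_iff.1 he <;>
    simp only [cycleEdge, whisker, Sym2.mem_iff, inl.injEq, reduceCtorEq, or_false] at hj <;>
    rcases hj with rfl | rfl <;> simp [star]

theorem eq_whisker_of_inr_mem [NeZero n] {j : Fin (n + 1)} {e : Edge n}
    (he : e ∈ (whiskeredCycle (n + 1)).edgeSet) (hj : inr j ∈ e) : e = whisker j := by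
  obtain ⟨i, rfl | rfl⟩ := mem_edgeSet_iff.1 he <;> simp_all [cycleEdge, whisker]

theorem card_star (hn : 2 ≤ n) (j : Fin (n + 1)) : (star j).card = 3 := by
  have := Fin.one_add_one_ne_zero_of_two_le hn
  rw [star, Finset.card_eq_three]
  refine ⟨_, _, _, ?_, ?_, ?_, rfl⟩ <;>
    simp [cycleEdge, whisker, sub_eq_iff_eq_add, add_assoc, this]
  omega

theorem star_subset_iff {j : Fin (n + 1)} {H : Finset (Edge n)} :
    star j ⊆ H ↔ cycleEdge (j - 1) ∈ H ∧ cycleEdge j ∈ H ∧ whisker j ∈ H := by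
  simp [star, Finset.insert_subset_iff]

-- The stars are the edge sets at the cycle vertices; a leaf lies on a single edge.
theorem mem_M2_faces_iff (hn : 2 ≤ n) {H : Finset (Edge n)} :
    H ∈ (M2 (whiskeredCycle (n + 1))).faces ↔
      ↑H ⊆ (whiskeredCycle (n + 1)).edgeSet ∧ ∀ j, ¬ star j ⊆ H := by
  have : NeZero n := ⟨by omega⟩
  constructor
  · rintro ⟨hE, hdeg⟩
    refine ⟨hE, fun j hj => ?_⟩
    have : star j ⊆ H.filter (inl j ∈ ·) := fun e he =>
      Finset.mem_filter.2 ⟨hj he, inl_mem_of_mem_star he⟩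
    have := (Finset.card_le_card this).trans (hdeg (inl j))
    rw [card_star hn] at this
    omega
  · rintro ⟨hE, hstar⟩
    refine ⟨hE, fun v => ?_⟩
    rcases v with j | j
    · have hsub : H.filter (inl j ∈ ·) ⊂ star j := by
        refine Finset.ssubset_iff_subset_ne.2 ⟨fun e he => ?_, fun h => hstar j ?_⟩
        · rw [Finset.mem_filter] at he
          exact mem_star_of_inl_mem (hE he.1) he.2
        · exact h ▸ Finset.filter_subset _ H
      exact Nat.le_of_lt_succ ((Finset.card_lt_card hsub).trans_eq (card_star hn j))
    · have hsub : H.filter (inr j ∈ ·) ⊆ {whisker j} := fun e he => by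
        rw [Finset.mem_filter] at he
        exact Finset.mem_singleton.2 (eq_whisker_of_inr_mem (hE he.1) he.2)
      exact (Finset.card_le_card hsub).trans (by simp)

theorem exists_M2_face_iff (hn : 2 ≤ n) (P : Edge n → Prop) :
    (∃ σ ∈ (M2 (whiskeredCycle (n + 1))).faces, ∀ e, P e → e ∈ σ) ↔
      (∀ e, P e → e ∈ (whiskeredCycle (n + 1)).edgeSet) ∧
        ∀ j, ¬ (P (cycleEdge (j - 1)) ∧ P (cycleEdge j) ∧ P (whisker j)) := by
  classical
  constructor
  · rintro ⟨σ, hσ, hP⟩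
    rw [mem_M2_faces_iff hn] at hσ
    exact ⟨fun e he => hσ.1 (hP e he), fun j hj =>
      hσ.2 j (star_subset_iff.2 ⟨hP _ hj.1, hP _ hj.2.1, hP _ hj.2.2⟩)⟩
  · rintro ⟨hE, hP⟩
    refine ⟨Finset.univ.filter P, (mem_M2_faces_iff hn).2 ⟨fun e he => hE e ?_, fun j hj => ?_⟩,
      fun e he => by simpa using he⟩
    · simpa using he
    · simp only [star_subset_iff, Finset.mem_filter, Finset.mem_univ, true_and] at hj
      exact hP j hj

def crossCoords (f : Edge n → ℝ) : EuclideanSpace ℝ (Fin (n + 1)) :=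
  WithLp.toLp 2 fun i =>
    f (cycleEdge i) - f (whisker (i + 1)) - f (cycleEdge (i - 1)) * f (whisker i)

section crossCoords

variable {f : Edge n → ℝ}

theorem crossCoords_apply (i : Fin (n + 1)) :
    crossCoords f i =
      f (cycleEdge i) - f (whisker (i + 1)) - f (cycleEdge (i - 1)) * f (whisker i) :=
  rfl

theorem crossCoords_le (hf : ∀ e, 0 ≤ f e) (i : Fin (n + 1)) :
    crossCoords f i ≤ f (cycleEdge i) := by
  have := mul_nonneg (hf (cycleEdge (i - 1))) (hf (whisker i))
  have := hf (whisker (i + 1))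
  rw [crossCoords_apply]
  linarith

theorem crossCoords_nonneg (hf : ∀ e, 0 ≤ f e)
    (hstar : ∀ j, ¬ (f (cycleEdge (j - 1)) ≠ 0 ∧ f (cycleEdge j) ≠ 0 ∧ f (whisker j) ≠ 0))
    {i : Fin (n + 1)} (hi : f (cycleEdge i) ≠ 0) (hi' : f (cycleEdge (i + 1)) ≠ 0) :
    0 ≤ crossCoords f i := by
  have hw : f (whisker (i + 1)) = 0 := by
    by_contra h
    exact hstar (i + 1) ⟨by rwa [add_sub_cancel_right], hi', h⟩
  have hprod : f (cycleEdge (i - 1)) * f (whisker i) = 0 := by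
    by_contra h
    exact hstar i ⟨left_ne_zero_of_mul h, hi, right_ne_zero_of_mul h⟩
  rw [crossCoords_apply, hw, hprod]
  linarith [hf (cycleEdge i)]

theorem crossCoords_ne_zero [NeZero n] (hf : ∀ e, 0 ≤ f e)
    (hE : ∀ e, f e ≠ 0 → e ∈ (whiskeredCycle (n + 1)).edgeSet)
    (hstar : ∀ j, ¬ (f (cycleEdge (j - 1)) ≠ 0 ∧ f (cycleEdge j) ≠ 0 ∧ f (whisker j) ≠ 0))
    (hf0 : f ≠ 0) : crossCoords f ≠ 0 := by
  intro h
  have hU (i : Fin (n + 1)) : crossCoords f i = 0 := by rw [h]; rfl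
  -- A weight on `w_j` forces one on `c_{j-1}` (coordinate `j - 1`), hence none on `c_j`, and
  -- then coordinate `j` is negative.
  have hw (j : Fin (n + 1)) : f (whisker j) = 0 := by
    by_contra hj
    have hpos : 0 < f (whisker j) := (hf _).lt_of_ne' hj
    have hprev := hU (j - 1)
    rw [crossCoords_apply, sub_add_cancel] at hprev
    have hc : 0 < f (cycleEdge (j - 1)) := by
      nlinarith [mul_nonneg (hf (cycleEdge (j - 1 - 1))) (hf (whisker (j - 1)))]
    have hc' : f (cycleEdge j) = 0 := by
      by_contra h'
      exact hstar j ⟨hc.ne', h', hj⟩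
    have := hU j
    rw [crossCoords_apply, hc'] at this
    nlinarith [hf (whisker (j + 1)), mul_pos hc hpos]
  have hc (i : Fin (n + 1)) : f (cycleEdge i) = 0 := by
    simpa [crossCoords_apply, hw] using hU i
  refine hf0 (funext fun e => ?_)
  by_contra he
  obtain ⟨i, rfl | rfl⟩ := mem_edgeSet_iff.1 (hE e he)
  exacts [he (hc i), he (hw i)]

end crossCoords

def crossWeights (y : Fin (n + 1) → ℝ) (e : Edge n) : ℝ :=
  (∑ i, |y i|)⁻¹ *
    ∑ i, ((if e = cycleEdge i then (y i)⁺ else 0) + if e = whisker (i + 1) then (y i)⁻ else 0)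

section crossWeights

variable (y : Fin (n + 1) → ℝ)

theorem crossWeights_cycleEdge (hn : 2 ≤ n) (k : Fin (n + 1)) :
    crossWeights y (cycleEdge k) = (∑ i, |y i|)⁻¹ * (y k)⁺ := by
  simp [crossWeights, (cycleEdge_injective hn).eq_iff, cycleEdge_ne_whisker]

theorem crossWeights_whisker (k : Fin (n + 1)) :
    crossWeights y (whisker k) = (∑ i, |y i|)⁻¹ * (y (k - 1))⁻ := by
  have hk (i : Fin (n + 1)) : k = i + 1 ↔ k - 1 = i := by rw [sub_eq_iff_eq_add]
  simp [crossWeights, whisker_injective.eq_iff, (cycleEdge_ne_whisker _ _).symm, hk]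

theorem crossWeights_nonneg (e : Edge n) : 0 ≤ crossWeights y e := by
  unfold crossWeights
  refine mul_nonneg (by positivity) (Finset.sum_nonneg fun i _ => add_nonneg ?_ ?_) <;>
    split_ifs <;> simp [posPart_nonneg, negPart_nonneg]

theorem sum_crossWeights (hy : y ≠ 0) : ∑ e, crossWeights y e = 1 := by
  simp only [crossWeights, ← Finset.mul_sum]
  rw [Finset.sum_comm]
  simp only [Finset.sum_add_distrib, Finset.sum_ite_eq', Finset.mem_univ, if_true]
  rw [← Finset.sum_add_distrib]
  simp only [posPart_add_negPart]
  exact inv_mul_cancel₀ (sum_abs_pos hy).ne'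

theorem mem_edgeSet_of_crossWeights_ne_zero [NeZero n] {e : Edge n}
    (he : crossWeights y e ≠ 0) : e ∈ (whiskeredCycle (n + 1)).edgeSet := by
  obtain ⟨i, -, hi⟩ := Finset.exists_ne_zero_of_sum_ne_zero (right_ne_zero_of_mul he)
  refine mem_edgeSet_iff.2 ?_
  by_cases h1 : e = cycleEdge i
  · exact ⟨i, .inl h1⟩
  by_cases h2 : e = whisker (i + 1)
  · exact ⟨i + 1, .inr h2⟩
  simp [h1, h2] at hi

theorem crossWeights_cycleEdge_ne_zero_iff (hn : 2 ≤ n) (k : Fin (n + 1)) :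
    crossWeights y (cycleEdge k) ≠ 0 ↔ 0 < y k := by
  simp only [crossWeights_cycleEdge y hn, ne_eq, mul_eq_zero, not_or, posPart_eq_zero, not_le]
  exact and_iff_right_of_imp fun h => inv_ne_zero (sum_abs_pos (Function.ne_iff.2 ⟨k, h.ne'⟩)).ne'

theorem crossWeights_whisker_ne_zero_iff (k : Fin (n + 1)) :
    crossWeights y (whisker k) ≠ 0 ↔ y (k - 1) < 0 := by
  simp only [crossWeights_whisker, ne_eq, mul_eq_zero, not_or, negPart_eq_zero, not_le]
  exact and_iff_right_of_imp fun h => inv_ne_zero (sum_abs_pos (Function.ne_iff.2 ⟨_, h.ne⟩)).ne'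

theorem crossCoords_crossWeights (hn : 2 ≤ n) :
    crossCoords (crossWeights y) = (∑ i, |y i|)⁻¹ • WithLp.toLp 2 y := by
  ext i
  simp only [crossCoords_apply, crossWeights_cycleEdge y hn, crossWeights_whisker,
    add_sub_cancel_right, PiLp.smul_apply, smul_eq_mul]
  rw [mul_mul_mul_comm, posPart_mul_negPart_eq_zero, mul_zero, sub_zero, ← mul_sub,
    posPart_sub_negPart]

end crossWeights

theorem crossCoords_val_ne_zero (hn : 2 ≤ n) (x : TwoMatchingSpace n) : crossCoords x.1 ≠ 0 := by
  have : NeZero n := ⟨by omega⟩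
  obtain ⟨hE, hstar⟩ := (exists_M2_face_iff hn _).1 x.2.2.2
  exact crossCoords_ne_zero x.2.1 hE hstar (realization.val_ne_zero x)

def toSphereMap (hn : 2 ≤ n) : C(TwoMatchingSpace n, sphereSpace n) :=
  toSphere ⟨fun x => crossCoords x.1, by unfold crossCoords; fun_prop⟩ (crossCoords_val_ne_zero hn)

def ofSphereMap (hn : 2 ≤ n) : C(sphereSpace n, TwoMatchingSpace n) where
  toFun y := ⟨crossWeights y.1, crossWeights_nonneg _,
    sum_crossWeights _ (sphereSpace.ofLp_ne_zero y), by
      have : NeZero n := ⟨by omega⟩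
      refine (exists_M2_face_iff hn _).2
        ⟨fun e => mem_edgeSet_of_crossWeights_ne_zero _, fun j hj => ?_⟩
      rw [crossWeights_cycleEdge_ne_zero_iff _ hn, crossWeights_whisker_ne_zero_iff] at hj
      exact hj.1.not_gt hj.2.2⟩
  continuous_toFun := by
    refine Continuous.subtype_mk (continuous_pi fun e => ?_) _
    have hsum (y : sphereSpace n) : ∑ i, |y.1 i| ≠ 0 :=
      (sum_abs_pos (sphereSpace.ofLp_ne_zero y)).ne'
    unfold crossWeights
    exact (Continuous.inv₀ (by fun_prop) hsum).mul (continuous_finsetSum _ fun i _ =>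
        .add (.if_const _ (by fun_prop) (by fun_prop)) (.if_const _ (by fun_prop) (by fun_prop)))

theorem toSphereMap_comp_ofSphereMap (hn : 2 ≤ n) :
    (toSphereMap hn).comp (ofSphereMap hn) = ContinuousMap.id _ := by
  ext1 y
  apply Subtype.ext
  change ‖crossCoords (crossWeights y.1)‖⁻¹ • crossCoords (crossWeights y.1) = y.1
  have hs := inv_pos.2 (sum_abs_pos (sphereSpace.ofLp_ne_zero y))
  rw [crossCoords_crossWeights _ hn, WithLp.toLp_ofLp, norm_smul, norm_eq_of_mem_sphere y,
    mul_one, Real.norm_of_nonneg hs.le, smul_smul, inv_mul_cancel₀ hs.ne', one_smul]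

theorem exists_face_crossWeights_smul_crossCoords (hn : 2 ≤ n) (x : TwoMatchingSpace n)
    {c : ℝ} (hc : 0 < c) : ∃ σ ∈ (M2 (whiskeredCycle (n + 1))).faces,
      ∀ e, crossWeights ⇑(c • crossCoords x.1) e ≠ 0 ∨ x.1 e ≠ 0 → e ∈ σ := by
  have : NeZero n := ⟨by omega⟩
  obtain ⟨hE, hstar⟩ := (exists_M2_face_iff hn _).1 x.2.2.2
  have hcycle (i : Fin (n + 1)) (h : crossWeights ⇑(c • crossCoords x.1) (cycleEdge i) ≠ 0 ∨
      x.1 (cycleEdge i) ≠ 0) : x.1 (cycleEdge i) ≠ 0 := by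
    rw [crossWeights_cycleEdge_ne_zero_iff _ hn, PiLp.smul_apply, smul_pos_iff_of_pos_left hc]
      at h
    exact h.elim (fun h => (h.trans_le (crossCoords_le x.2.1 i)).ne') id
  refine (exists_M2_face_iff hn _).2 ⟨?_, fun j ⟨h1, h2, h3⟩ => ?_⟩
  · rintro e (h | h)
    exacts [mem_edgeSet_of_crossWeights_ne_zero _ h, hE e h]
  rw [crossWeights_whisker_ne_zero_iff, PiLp.smul_apply, smul_neg_iff_of_pos_left hc] at h3
  rcases h3 with h3 | h3
  · refine h3.not_ge (crossCoords_nonneg x.2.1 hstar (hcycle _ h1) ?_)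
    rw [sub_add_cancel]
    exact hcycle _ h2
  · exact hstar j ⟨hcycle _ h1, hcycle _ h2, h3⟩

theorem nonempty_homotopyEquiv_sphere (hn : 2 ≤ n) :
    Nonempty (ContinuousMap.HomotopyEquiv (TwoMatchingSpace n) (sphereSpace n)) :=
  ⟨{ toFun := toSphereMap hn
     invFun := ofSphereMap hn
     left_inv := realization.homotopic_of_exists_face _ _ fun x =>
       exists_face_crossWeights_smul_crossCoords hn x
         (inv_pos.2 (norm_pos_iff.2 (crossCoords_val_ne_zero hn x)))
     right_inv := by rw [toSphereMap_comp_ofSphereMap] }⟩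

end whiskeredCycle

/-- for `m ≥ 3`, the 2-matching complex of the fully whiskered
`2m`-cycle is homotopy equivalent to `S^{2m-1}`. -/
theorem stmt_9 (m : ℕ) (hm : 3 ≤ m) :
    Nonempty (ContinuousMap.HomotopyEquiv (realization (M2 (whiskeredCycle (2 * m))))
      (sphereSpace (2 * m - 1))) := by
  obtain ⟨n, hn⟩ : ∃ n, 2 * m = n + 1 := ⟨2 * m - 1, by omega⟩
  rw [hn, Nat.add_sub_cancel]
  exact whiskeredCycle.nonempty_homotopyEquiv_sphere (by omega)
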